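/- Let F be uniform on [0,1], u the identity, and 0 ≤ ε ≤ 1/2. A divider with valuation x playing the optimal price announcement against the distribution band G(F,ε) obtains interim worst-case expected utility Φ_D(x) = x²/4 + (1/4 + ε/2)x + ε²/4 - ε/4 + 1/16 for 0 ≤ x < 1/2 - ε; Φ_D(x) = x/2 for 1/2 - ε ≤ x ≤ 1/2 + ε; and Φ_D(x) = x²/4 + (1/4 - ε/2)x + ε²/4 + ε/4 + 1/16 for 1/2 + ε < x ≤ 1. -/

import Mathlib

/-!
The payoff `p + (x - 2p) G(2p)` is affine in the belief `G(2p)`, with the sign of `x - 2p` as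
slope. Since `G₀ ≤ G₁`, the worst case over the band is therefore the upper edge `G₁` when the
announcement satisfies `x ≤ 2p`, the lower edge `G₀` when `2p ≤ x`, and at `p = x / 2` the belief
does not matter at all. In each region of `mOpt` the relevant edge is linear at `2p`, so the value
is a polynomial identity.
-/

open Set

/-- Lower bound of the distribution band `𝒢(U[0,1], ε)`. -/
noncomputable def bandG0 (ε x : ℝ) : ℝ := if x < 1 then max (x - ε) 0 else 1

/-- Upper bound of the distribution band `𝒢(U[0,1], ε)`. -/
noncomputable def bandG1 (ε x : ℝ) : ℝ := min (x + ε) 1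

/-- Risk-neutral divider's expected payoff against belief `G`. -/
noncomputable def payoff (G : ℝ → ℝ) (xD p : ℝ) : ℝ :=
  (xD - p) * G (2 * p) + p * (1 - G (2 * p))

/-- Worst-case payoff over the band. -/
noncomputable def wcPayoff (ε xD p : ℝ) : ℝ :=
  min (payoff (bandG0 ε) xD p) (payoff (bandG1 ε) xD p)

/-- Optimal price announcement in the uniform example. -/
noncomputable def mOpt (ε xD : ℝ) : ℝ :=
  if xD < 1/2 - ε then xD / 4 - ε / 4 + 1/8
  else if xD ≤ 1/2 + ε then xD / 2
  else xD / 4 + ε / 4 + 1/8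

section Band

variable {ε y : ℝ}

theorem bandG0_le_bandG1 (hε : 0 ≤ ε) (hy : 0 ≤ y) : bandG0 ε y ≤ bandG1 ε y := by
  unfold bandG0 bandG1
  split_ifs with hy1
  · exact max_le (le_min (by linarith) (by linarith)) (le_min (by linarith) zero_le_one)
  · exact le_min (by linarith) le_rfl

theorem bandG0_of_le (hy : y < 1) (h : ε ≤ y) : bandG0 ε y = y - ε := by
  rw [bandG0, if_pos hy, max_eq_left (sub_nonneg.mpr h)]

theorem bandG1_of_le (h : y + ε ≤ 1) : bandG1 ε y = y + ε :=
  min_eq_left h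

end Band

section Payoff

variable {G G' : ℝ → ℝ} {xD p : ℝ}

theorem payoff_eq (G : ℝ → ℝ) (xD p : ℝ) : payoff G xD p = p + (xD - 2 * p) * G (2 * p) := by
  unfold payoff
  ring

theorem payoff_le_payoff_of_le_two_mul (hG : G (2 * p) ≤ G' (2 * p)) (h : xD ≤ 2 * p) :
    payoff G' xD p ≤ payoff G xD p := by
  rw [payoff_eq, payoff_eq]
  nlinarith

theorem payoff_le_payoff_of_two_mul_le (hG : G (2 * p) ≤ G' (2 * p)) (h : 2 * p ≤ xD) :
    payoff G xD p ≤ payoff G' xD p := by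
  rw [payoff_eq, payoff_eq]
  nlinarith

theorem payoff_half (G : ℝ → ℝ) (xD : ℝ) : payoff G xD (xD / 2) = xD / 2 := by
  rw [payoff_eq]
  ring

end Payoff

section WorstCase

variable {ε xD p : ℝ}

theorem wcPayoff_of_le_two_mul (hε : 0 ≤ ε) (hp : 0 ≤ p) (h : xD ≤ 2 * p) :
    wcPayoff ε xD p = payoff (bandG1 ε) xD p :=
  min_eq_right <| payoff_le_payoff_of_le_two_mul (bandG0_le_bandG1 hε (by linarith)) h

theorem wcPayoff_of_two_mul_le (hε : 0 ≤ ε) (hp : 0 ≤ p) (h : 2 * p ≤ xD) :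
    wcPayoff ε xD p = payoff (bandG0 ε) xD p :=
  min_eq_left <| payoff_le_payoff_of_two_mul_le (bandG0_le_bandG1 hε (by linarith)) h

theorem wcPayoff_half (ε xD : ℝ) : wcPayoff ε xD (xD / 2) = xD / 2 := by
  rw [wcPayoff, payoff_half, payoff_half, min_self]

end WorstCase

section Regions

variable {ε x : ℝ}

theorem wcPayoff_mOpt_of_lt_half_sub (hε : 0 ≤ ε) (hx : 0 ≤ x) (hlow : x < 1/2 - ε) :
    wcPayoff ε x (mOpt ε x) = x^2 / 4 + (1/4 + ε / 2) * x + ε^2 / 4 - ε / 4 + 1/16 := by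
  rw [mOpt, if_pos hlow, wcPayoff_of_le_two_mul hε (by linarith) (by linarith), payoff_eq,
    bandG1_of_le (by linarith)]
  ring

theorem wcPayoff_mOpt_of_half_add_lt (hε : 0 ≤ ε) (hx : x ≤ 1) (hhigh : 1/2 + ε < x) :
    wcPayoff ε x (mOpt ε x) = x^2 / 4 + (1/4 - ε / 2) * x + ε^2 / 4 + ε / 4 + 1/16 := by
  rw [mOpt, if_neg (by linarith), if_neg (by linarith),
    wcPayoff_of_two_mul_le hε (by linarith) (by linarith), payoff_eq,
    bandG0_of_le (by linarith) (by linarith)]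
  ring

end Regions

theorem uniform_band_interim_utility_general (ε : ℝ) (hε0 : 0 ≤ ε)
    (x : ℝ) (hx : x ∈ Icc (0:ℝ) 1) :
    wcPayoff ε x (mOpt ε x) =
      if x < 1/2 - ε then x^2 / 4 + (1/4 + ε / 2) * x + ε^2 / 4 - ε / 4 + 1/16
      else if x ≤ 1/2 + ε then x / 2
      else x^2 / 4 + (1/4 - ε / 2) * x + ε^2 / 4 + ε / 4 + 1/16 := by
  obtain ⟨hx0, hx1⟩ := hx
  split_ifs with hlow hmid
  · exact wcPayoff_mOpt_of_lt_half_sub hε0 hx0 hlow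
  · rw [mOpt, if_neg hlow, if_pos hmid, wcPayoff_half]
  · exact wcPayoff_mOpt_of_half_add_lt hε0 hx1 (not_le.mp hmid)

/-- Interim worst-case expected utility of the divider in the uniform example. -/
theorem uniform_band_interim_utility (ε : ℝ) (hε0 : 0 ≤ ε) (hε1 : ε ≤ 1/2)
    (x : ℝ) (hx : x ∈ Icc (0:ℝ) 1) :
    wcPayoff ε x (mOpt ε x) =
      if x < 1/2 - ε then x^2 / 4 + (1/4 + ε / 2) * x + ε^2 / 4 - ε / 4 + 1/16
      else if x ≤ 1/2 + ε then x / 2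
      else x^2 / 4 + (1/4 - ε / 2) * x + ε^2 / 4 + ε / 4 + 1/16 :=
  uniform_band_interim_utility_general ε hε0 x hx
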